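/- arXiv:math/0303263 — 2 statements merged into one kernel-verified Lean document; each statement's English description precedes it below -/
import Mathlib

section
/- Assume R is reduced, let λ ∈ P⁺, let π ∈ E, and let q, t > 0 be real numbers. Then the following identity holds in ℝ[P] (it is the identity obtained from the action of the Macdonald operator D_π on m_λ, namely D_π m_λ = t^{⟨π,ρ⟩} Σ_{ν∈W(λ)} (Σ_{τ∈W(π)} t^{⟨τ,ρ⟩} q^{⟨τ,ν⟩}) χ_ν, after multiplying by the Weyl denominator): Σ_{ν∈W(λ)} Σ_{w∈W} Σ_{τ∈W(π)} det(w) · t^{⟨τ, w(ρ)⟩} · q^{⟨τ, ν⟩} · e^{ν + w(ρ)} = Σ_{ν∈W(λ)} ( Σ_{τ∈W(π)} t^{⟨τ,ρ⟩} q^{⟨τ,ν⟩} ) · Σ_{w∈W} det(w) · e^{w(ν+ρ)}, where the inner sums over W(λ) and W(π) run over the (finite) Weyl orbits of λ and π, and real powers t^x, q^x are used. -/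
open scoped RealInnerProductSpace

noncomputable section

variable {E : Type*} [NormedAddCommGroup E] [InnerProductSpace ℝ E]

/-- The coroot pairing `⟨x, α∨⟩ = 2⟨x,α⟩/⟨α,α⟩`. -/
def copair (α x : E) : ℝ := 2 * ⟪x, α⟫ / ⟪α, α⟫

/-- The orthogonal reflection `r_α(x) = x - ⟨x,α∨⟩α`. -/
def reflRoot (α x : E) : E := x - copair α x • α

/-- The set of reflections in the roots of `R`, as linear automorphisms. -/
def reflections (R : Finset E) : Set (E ≃ₗ[ℝ] E) :=
  {g | ∃ α ∈ R, ∀ x, g x = reflRoot α x}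

/-- The Weyl group of `R`. -/
def weylGroup (R : Finset E) : Subgroup (E ≃ₗ[ℝ] E) :=
  Subgroup.closure (reflections R)

/-- Membership in the weight lattice `P`. -/
def IsWeight (R : Finset E) (x : E) : Prop :=
  ∀ α ∈ R, ∃ z : ℤ, copair α x = (z : ℝ)

/-- Dominance: nonnegative pairing with all positive coroots. -/
def IsDominant (Rp : Finset E) (x : E) : Prop :=
  ∀ α ∈ Rp, 0 ≤ copair α x

/-- The Weyl orbit `W(x)` as a finset. -/
def weylOrbit [DecidableEq E] (R : Finset E) [Fintype (weylGroup R)] (x : E) : Finset E :=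
  Finset.image (fun w : weylGroup R => (w : E ≃ₗ[ℝ] E) x) Finset.univ

/-- The determinant of a Weyl group element, as a linear map on `E`. -/
def detW {R : Finset E} (w : weylGroup R) : ℝ :=
  LinearMap.det ((w : E ≃ₗ[ℝ] E) : E →ₗ[ℝ] E)

/-
For each fixed `w ∈ W`, the substitution `ν ↦ w ν`, `τ ↦ w τ` permutes the Weyl orbits `W(λ)` and
`W(π)`, and since `W` preserves the inner product it turns `t^⟨τ, w ρ⟩ q^⟨τ, ν⟩ e^{ν + w ρ}` into
`t^⟨τ, ρ⟩ q^⟨τ, ν⟩ e^{w (ν + ρ)}`. Summing over `w` gives the identity.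
-/

/-- Holds for every `α`: at `α = 0` the junk value `copair 0 x = 0` makes `reflRoot 0` the
identity. -/
theorem inner_reflRoot_reflRoot (α x y : E) : ⟪reflRoot α x, reflRoot α y⟫ = ⟪x, y⟫ := by
  rcases eq_or_ne α 0 with rfl | hα
  · simp [reflRoot]
  have hαα : ⟪α, α⟫ ≠ 0 := inner_self_ne_zero.2 hα
  simp only [reflRoot, copair, inner_sub_left, inner_sub_right, real_inner_smul_left,
    real_inner_smul_right, real_inner_comm α x, real_inner_comm α y]
  field_simp
  ring

theorem inner_apply_apply_of_mem_weylGroup {R : Finset E} {w : E ≃ₗ[ℝ] E}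
    (hw : w ∈ weylGroup R) (x y : E) : ⟪w x, w y⟫ = ⟪x, y⟫ := by
  induction hw using Subgroup.closure_induction generalizing x y with
  | mem g hg =>
    obtain ⟨α, -, hg⟩ := hg
    rw [hg x, hg y, inner_reflRoot_reflRoot]
  | one => rfl
  | mul g h _ _ ihg ihh => exact (ihg (h x) (h y)).trans (ihh x y)
  | inv g _ ih => simpa using (ih (g⁻¹ x) (g⁻¹ y)).symm

section weylOrbit

variable [DecidableEq E] {R : Finset E} [Fintype (weylGroup R)]

theorem mem_weylOrbit {x y : E} :
    y ∈ weylOrbit R x ↔ ∃ u : weylGroup R, (u : E ≃ₗ[ℝ] E) x = y := by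
  simp [weylOrbit]

theorem apply_mem_weylOrbit (w : weylGroup R) {x y : E} (hy : y ∈ weylOrbit R x) :
    (w : E ≃ₗ[ℝ] E) y ∈ weylOrbit R x := by
  obtain ⟨u, rfl⟩ := mem_weylOrbit.1 hy
  exact mem_weylOrbit.2 ⟨w * u, rfl⟩

theorem sum_weylOrbit_comp_apply {M : Type*} [AddCommMonoid M] (x : E) (w : weylGroup R)
    (F : E → M) : ∑ y ∈ weylOrbit R x, F ((w : E ≃ₗ[ℝ] E) y) = ∑ y ∈ weylOrbit R x, F y :=
  Finset.sum_nbij' _ _ (fun _ => apply_mem_weylOrbit w) (fun _ => apply_mem_weylOrbit w⁻¹)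
    (fun y _ => (w : E ≃ₗ[ℝ] E).symm_apply_apply y)
    (fun y _ => (w : E ≃ₗ[ℝ] E).apply_symm_apply y) (fun _ _ => rfl)

end weylOrbit

theorem macdonald_operator_action_general
    [DecidableEq E] (R : Finset E) [Fintype (weylGroup R)]
    (ρ : E) (lam : E) (π : E) (q t : ℝ) :
    ∑ ν ∈ weylOrbit R lam, ∑ w : weylGroup R, ∑ τ ∈ weylOrbit R π,
        (detW w * t ^ ⟪τ, (w : E ≃ₗ[ℝ] E) ρ⟫ * q ^ ⟪τ, ν⟫) •
          AddMonoidAlgebra.single (ν + (w : E ≃ₗ[ℝ] E) ρ) (1 : ℝ) =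
      ∑ ν ∈ weylOrbit R lam,
        (∑ τ ∈ weylOrbit R π, t ^ ⟪τ, ρ⟫ * q ^ ⟪τ, ν⟫) •
          ∑ w : weylGroup R,
            detW w • AddMonoidAlgebra.single ((w : E ≃ₗ[ℝ] E) (ν + ρ)) (1 : ℝ) := by
  simp only [Finset.smul_sum, smul_smul, Finset.sum_mul, Finset.sum_smul]
  rw [Finset.sum_comm, Finset.sum_comm (s := weylOrbit R lam)]
  refine Finset.sum_congr rfl fun w _ => (sum_weylOrbit_comp_apply lam w _).symm.trans ?_
  refine Finset.sum_congr rfl fun ν _ => (sum_weylOrbit_comp_apply π w _).symm.trans ?_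
  refine Finset.sum_congr rfl fun τ _ => ?_
  have hw := inner_apply_apply_of_mem_weylGroup w.2
  rw [hw, hw, ← map_add]
  congr 1
  ring

/-- **Action of the Macdonald operator on monomial symmetric functions**
(multiplied through by the Weyl denominator):
`Σ_{ν∈W(λ)} Σ_{w∈W} Σ_{τ∈W(π)} det(w) t^{⟨τ,w(ρ)⟩} q^{⟨τ,ν⟩} e^{ν+w(ρ)}
  = Σ_{ν∈W(λ)} (Σ_{τ∈W(π)} t^{⟨τ,ρ⟩} q^{⟨τ,ν⟩}) Σ_{w∈W} det(w) e^{w(ν+ρ)}`.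
Powers are real (`rpow`) powers and formal exponentials `e^μ` are realized as
`AddMonoidAlgebra.single μ 1`. -/
theorem macdonald_operator_action
    [DecidableEq E] (R Rp : Finset E) [Fintype (weylGroup R)]
    (h0 : (0 : E) ∉ R)
    (hspan : Submodule.span ℝ (R : Set E) = ⊤)
    (hcrys : ∀ α ∈ R, ∀ β ∈ R, ∃ z : ℤ, copair α β = (z : ℝ))
    (hrc : ∀ α ∈ R, ∀ β ∈ R, reflRoot α β ∈ R)
    (hred : ∀ α ∈ R, (2 : ℝ) • α ∉ R)
    (f : E →ₗ[ℝ] ℝ) (hf : ∀ α ∈ R, f α ≠ 0)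
    (hRp : ∀ α, α ∈ Rp ↔ α ∈ R ∧ 0 < f α)
    (ρ : E) (hρ : ρ = (2⁻¹ : ℝ) • ∑ α ∈ Rp, α)
    (lam : E) (hlamP : IsWeight R lam) (hlamD : IsDominant Rp lam)
    (π : E) (q t : ℝ) (hq : 0 < q) (ht : 0 < t) :
    ∑ ν ∈ weylOrbit R lam, ∑ w : weylGroup R, ∑ τ ∈ weylOrbit R π,
        (detW w * t ^ ⟪τ, (w : E ≃ₗ[ℝ] E) ρ⟫ * q ^ ⟪τ, ν⟫) •
          AddMonoidAlgebra.single (ν + (w : E ≃ₗ[ℝ] E) ρ) (1 : ℝ) =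
      ∑ ν ∈ weylOrbit R lam,
        (∑ τ ∈ weylOrbit R π, t ^ ⟪τ, ρ⟫ * q ^ ⟪τ, ν⟫) •
          ∑ w : weylGroup R,
            detW w • AddMonoidAlgebra.single ((w : E ≃ₗ[ℝ] E) (ν + ρ)) (1 : ℝ) :=
  macdonald_operator_action_general R ρ lam π q t
end
end

section
/- Let λ ∈ P⁺ be a dominant weight, let ν ∈ W(λ) be any weight in its Weyl orbit, and let w ∈ W. Then λ − (w(ν+ρ) − ρ) ∈ Q⁺, i.e. the weight w(ν+ρ) − ρ is smaller than or equal to λ in the dominance order. (This expresses the triangularity of the Macdonald operator with respect to the dominance order.) -/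
open scoped RealInnerProductSpace

noncomputable section

variable {E : Type*} [NormedAddCommGroup E] [InnerProductSpace ℝ E]

/-- Membership in `Q⁺`, the nonnegative integer span of the positive roots. -/
def InQPlus (Rp : Finset E) (x : E) : Prop :=
  ∃ c : E → ℕ, x = ∑ α ∈ Rp, (c α : ℝ) • α

-- ### basic copair lemmas

lemma copair_add (α x y : E) : copair α (x + y) = copair α x + copair α y := by
  simp only [copair, inner_add_left]; ring

lemma copair_smul (α : E) (t : ℝ) (x : E) : copair α (t • x) = t * copair α x := by
  simp only [copair, real_inner_smul_left]; ring

lemma copair_self {α : E} (hα : α ≠ 0) : copair α α = 2 := by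
  have h : (⟪α, α⟫ : ℝ) ≠ 0 := inner_self_ne_zero.mpr hα
  rw [copair, mul_div_assoc, div_self h, mul_one]

lemma copair_smul_root {α : E} {t : ℝ} (ht : t ≠ 0) (x : E) :
    copair (t • α) x = t⁻¹ * copair α x := by
  rcases eq_or_ne (⟪α, α⟫ : ℝ) 0 with h | h
  · simp only [copair, real_inner_smul_right, real_inner_smul_left, h]
    simp
  · simp only [copair, real_inner_smul_right, real_inner_smul_left]
    field_simp

lemma reflRoot_smul_root {α : E} {t : ℝ} (ht : t ≠ 0) (x : E) :
    reflRoot (t • α) x = reflRoot α x := by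
  simp only [reflRoot, copair_smul_root ht, smul_smul]
  congr 1
  field_simp

lemma reflRoot_self {α : E} (hα : α ≠ 0) : reflRoot α α = -α := by
  simp only [reflRoot, copair_self hα, two_smul]
  abel

lemma reflRoot_involutive (α : E) : Function.Involutive (reflRoot α) := by
  intro x
  by_cases hα : α = 0
  · simp [hα, reflRoot]
  · have h2 : copair α (reflRoot α x) = - copair α x := by
      simp only [reflRoot, copair, inner_sub_left, real_inner_smul_left]
      have h : (⟪α, α⟫ : ℝ) ≠ 0 := inner_self_ne_zero.mpr hα
      field_simp
      ring
    simp only [reflRoot] at h2 ⊢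
    rw [h2]
    module

def reflLin (α : E) : E →ₗ[ℝ] E where
  toFun x := reflRoot α x
  map_add' x y := by
    simp only [reflRoot, copair_add, add_smul]; abel
  map_smul' t x := by
    simp only [reflRoot, copair_smul, RingHom.id_apply, smul_sub, smul_smul]

def reflEquiv (α : E) : E ≃ₗ[ℝ] E :=
  LinearEquiv.ofInvolutive (reflLin α) (reflRoot_involutive α)

@[simp] lemma reflEquiv_apply (α x : E) : reflEquiv α x = reflRoot α x := rfl

lemma reflEquiv_mul_self (α : E) : reflEquiv α * reflEquiv α = 1 := by
  apply LinearEquiv.toLinearMap_injective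
  ext x
  exact reflRoot_involutive α x

lemma reflEquiv_inv (α : E) : (reflEquiv α)⁻¹ = reflEquiv α :=
  inv_eq_of_mul_eq_one_left (reflEquiv_mul_self α)

lemma reflEquiv_mem {R : Finset E} {α : E} (hα : α ∈ R) : reflEquiv α ∈ weylGroup R :=
  Subgroup.subset_closure ⟨α, hα, fun _ => rfl⟩

lemma reflEquiv_neg (α : E) : reflEquiv (-α) = reflEquiv α := by
  apply LinearEquiv.toLinearMap_injective
  ext x
  have : (-1 : ℝ) ≠ 0 := by norm_num
  simpa using reflRoot_smul_root (α := α) this x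

lemma reflEquiv_smul {α : E} {t : ℝ} (ht : t ≠ 0) : reflEquiv (t • α) = reflEquiv α := by
  apply LinearEquiv.toLinearMap_injective
  ext x
  exact reflRoot_smul_root ht x

-- ### Weyl group basics
lemma LinearEquiv.apply_inv_apply' (g : E ≃ₗ[ℝ] E) (x : E) : g (g⁻¹ x) = x := by
  rw [show g (g⁻¹ x) = (g * g⁻¹) x from rfl]
  rw [mul_inv_cancel]
  rfl

lemma LinearEquiv.inv_apply_apply' (g : E ≃ₗ[ℝ] E) (x : E) : g⁻¹ (g x) = x := by
  rw [show g⁻¹ (g x) = (g⁻¹ * g) x from rfl]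
  rw [inv_mul_cancel]
  rfl

section WeylBasics

variable {R : Finset E}

lemma refl_inner {α : E} (hα : α ≠ 0) (x y : E) :
    ⟪reflRoot α x, reflRoot α y⟫ = ⟪x, y⟫ := by
  have h : (⟪α, α⟫ : ℝ) ≠ 0 := inner_self_ne_zero.mpr hα
  simp only [reflRoot, copair, inner_sub_left, inner_sub_right, real_inner_smul_left,
    real_inner_smul_right]
  have hc : (⟪y, α⟫ : ℝ) = ⟪α, y⟫ := real_inner_comm _ _
  have hc2 : (⟪x, α⟫ : ℝ) = ⟪α, x⟫ := real_inner_comm _ _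
  field_simp
  ring_nf
  rw [hc, hc2]
  ring

lemma weyl_inner (h0 : (0 : E) ∉ R) {w : E ≃ₗ[ℝ] E} (hw : w ∈ weylGroup R) (x y : E) :
    ⟪w x, w y⟫ = ⟪x, y⟫ := by
  revert x y
  refine Subgroup.closure_induction (p := fun g _ => ∀ x y : E, ⟪g x, g y⟫ = ⟪x, y⟫)
    ?_ ?_ ?_ ?_ hw
  · rintro g ⟨α, hαR, hg⟩ x y
    have hα : α ≠ 0 := fun h => h0 (h ▸ hαR)
    rw [hg x, hg y]
    exact refl_inner hα x y
  · intro x y; rfl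
  · intro g h _ _ hg hh x y
    have : (g * h) x = g (h x) := rfl
    rw [this, show (g * h) y = g (h y) from rfl, hg, hh]
  · intro g _ hg x y
    have := hg (g⁻¹ x) (g⁻¹ y)
    rw [LinearEquiv.apply_inv_apply', LinearEquiv.apply_inv_apply'] at this
    exact this.symm

lemma weyl_root (h0 : (0 : E) ∉ R) (hrc : ∀ α ∈ R, ∀ β ∈ R, reflRoot α β ∈ R)
    {w : E ≃ₗ[ℝ] E} (hw : w ∈ weylGroup R) :
    ∀ β ∈ R, w β ∈ R ∧ w⁻¹ β ∈ R := by
  refine Subgroup.closure_induction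
    (p := fun g _ => ∀ β ∈ R, g β ∈ R ∧ g⁻¹ β ∈ R) ?_ ?_ ?_ ?_ hw
  · rintro g ⟨α, hαR, hg⟩ β hβ
    constructor
    · rw [hg β]; exact hrc α hαR β hβ
    · have hinv : ∀ x, g (g x) = x := by
        intro x; rw [hg, hg]; exact reflRoot_involutive α x
      have : g⁻¹ β = g β := by
        have h1 : g⁻¹ (g (g β)) = g β := LinearEquiv.inv_apply_apply' g (g β)
        rwa [hinv] at h1
      rw [this, hg]; exact hrc α hαR β hβ
  · intro β hβ; exact ⟨hβ, hβ⟩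
  · intro g h _ _ hg hh β hβ
    refine ⟨(hg _ ((hh β hβ).1)).1, ?_⟩
    have : (g * h)⁻¹ β = h⁻¹ (g⁻¹ β) := by rw [mul_inv_rev]; rfl
    rw [this]
    exact (hh _ ((hg β hβ).2)).2
  · intro g _ hg β hβ
    refine ⟨(hg β hβ).2, ?_⟩
    rw [inv_inv]
    exact (hg β hβ).1

lemma weyl_copair (h0 : (0 : E) ∉ R) {w : E ≃ₗ[ℝ] E} (hw : w ∈ weylGroup R) (α x : E) :
    copair (w α) (w x) = copair α x := by
  simp only [copair, weyl_inner h0 hw]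

lemma weyl_weight (h0 : (0 : E) ∉ R) (hrc : ∀ α ∈ R, ∀ β ∈ R, reflRoot α β ∈ R)
    {w : E ≃ₗ[ℝ] E} (hw : w ∈ weylGroup R) {lam : E} (hlam : IsWeight R lam) :
    IsWeight R (w lam) := by
  intro α hα
  have h1 : w⁻¹ α ∈ R := (weyl_root h0 hrc hw α hα).2
  have h2 : copair α (w lam) = copair (w⁻¹ α) lam := by
    conv_lhs => rw [← LinearEquiv.apply_inv_apply' w α]
    rw [weyl_copair h0 hw]
  rw [h2]
  exact hlam _ h1

lemma neg_root_mem (h0 : (0 : E) ∉ R) (hrc : ∀ α ∈ R, ∀ β ∈ R, reflRoot α β ∈ R)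
    {β : E} (hβ : β ∈ R) : -β ∈ R := by
  have hβ0 : β ≠ 0 := fun h => h0 (h ▸ hβ)
  have := hrc β hβ β hβ
  rwa [reflRoot_self hβ0] at this

end WeylBasics

attribute [local instance] Classical.propDecidable

-- ### cone lemmas

lemma inQPlus_zero (S : Finset E) : InQPlus S 0 :=
  ⟨fun _ => 0, by simp⟩

lemma inQPlus_add {S : Finset E} {x y : E} (hx : InQPlus S x) (hy : InQPlus S y) :
    InQPlus S (x + y) := by
  obtain ⟨c, hc⟩ := hx; obtain ⟨d, hd⟩ := hy
  refine ⟨fun α => c α + d α, ?_⟩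
  rw [hc, hd, ← Finset.sum_add_distrib]
  apply Finset.sum_congr rfl
  intro α _
  push_cast
  rw [add_smul]

lemma inQPlus_nsmul_single {S : Finset E} {β : E} (hβ : β ∈ S) (n : ℕ) :
    InQPlus S ((n : ℝ) • β) := by
  refine ⟨fun α => if α = β then n else 0, ?_⟩
  rw [Finset.sum_eq_single_of_mem β hβ]
  · simp
  · intro b _ hb; simp [hb]

lemma inQPlus_mem {S : Finset E} {β : E} (hβ : β ∈ S) : InQPlus S β := by
  have := inQPlus_nsmul_single hβ 1
  simpa using this

-- ### simple roots

def simpleSet (Rp : Finset E) : Finset E :=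
  Rp.filter fun α => ¬∃ β ∈ Rp, ∃ γ ∈ Rp, α = β + γ

lemma simpleSet_subset (Rp : Finset E) : simpleSet Rp ⊆ Rp := Finset.filter_subset _ _

section Simple

variable {R Rp : Finset E} {f : E →ₗ[ℝ] ℝ}

lemma filter_card_lt {γ β : E} (hγ : γ ∈ Rp) (h : f γ < f β) :
    (Rp.filter fun x => f x < f γ).card < (Rp.filter fun x => f x < f β).card := by
  apply Finset.card_lt_card
  rw [Finset.ssubset_iff_of_subset]
  · exact ⟨γ, Finset.mem_filter.mpr ⟨hγ, h⟩, fun hmem => (lt_irrefl _ (Finset.mem_filter.mp hmem).2)⟩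
  · intro x hx
    rw [Finset.mem_filter] at hx ⊢
    exact ⟨hx.1, hx.2.trans h⟩

lemma decomp (hRp : ∀ α, α ∈ Rp ↔ α ∈ R ∧ 0 < f α) :
    ∀ β ∈ Rp, InQPlus (simpleSet Rp) β := by
  have hRpf : ∀ α ∈ Rp, 0 < f α := fun α hα => ((hRp α).mp hα).2
  suffices H : ∀ n : ℕ, ∀ β ∈ Rp, (Rp.filter fun x => f x < f β).card ≤ n →
      InQPlus (simpleSet Rp) β by
    intro β hβ; exact H _ β hβ le_rfl
  intro n
  induction n with
  | zero =>
    intro β hβ hcard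
    by_cases hs : β ∈ simpleSet Rp
    · exact inQPlus_mem hs
    · exfalso
      rw [simpleSet, Finset.mem_filter, not_and] at hs
      obtain ⟨γ, hγ, γ', hγ', hβeq⟩ := not_not.mp (hs hβ)
      have hlt : f γ < f β := by
        have := hRpf γ' hγ'
        have : f β = f γ + f γ' := by rw [hβeq]; simp
        linarith [hRpf γ' hγ']
      have : γ ∈ Rp.filter fun x => f x < f β := Finset.mem_filter.mpr ⟨hγ, hlt⟩
      have := Finset.card_pos.mpr ⟨γ, this⟩
      omega
  | succ n ih =>
    intro β hβ hcard
    by_cases hs : β ∈ simpleSet Rp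
    · exact inQPlus_mem hs
    · rw [simpleSet, Finset.mem_filter, not_and] at hs
      obtain ⟨γ, hγ, γ', hγ', hβeq⟩ := not_not.mp (hs hβ)
      have hfβ : f β = f γ + f γ' := by rw [hβeq]; simp
      have hlt : f γ < f β := by linarith [hRpf γ' hγ']
      have hlt' : f γ' < f β := by linarith [hRpf γ hγ]
      have h1 : (Rp.filter fun x => f x < f γ).card ≤ n := by
        have := filter_card_lt (f := f) hγ hlt; omega
      have h2 : (Rp.filter fun x => f x < f γ').card ≤ n := by
        have := filter_card_lt (f := f) hγ' hlt'; omega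
      rw [hβeq]
      exact inQPlus_add (ih γ hγ h1) (ih γ' hγ' h2)

lemma simple_nonprop (h0 : (0 : E) ∉ R)
    (hcrys : ∀ α ∈ R, ∀ β ∈ R, ∃ z : ℤ, copair α β = (z : ℝ))
    (hRp : ∀ α, α ∈ Rp ↔ α ∈ R ∧ 0 < f α)
    {δ δ' : E} (hδ : δ ∈ simpleSet Rp) (hδ' : δ' ∈ simpleSet Rp) (hne : δ' ≠ δ) :
    ¬∃ t : ℝ, δ' = t • δ := by
  rintro ⟨t, rfl⟩
  have hδRp : δ ∈ Rp := simpleSet_subset Rp hδ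
  have hδ'Rp : t • δ ∈ Rp := simpleSet_subset Rp hδ'
  have hδR : δ ∈ R := ((hRp δ).mp hδRp).1
  have hδ'R : t • δ ∈ R := ((hRp _).mp hδ'Rp).1
  have hδ0 : δ ≠ 0 := fun h => h0 (h ▸ hδR)
  have ht0 : 0 < t := by
    have h1 := ((hRp δ).mp hδRp).2
    have h2 := ((hRp _).mp hδ'Rp).2
    rw [map_smul] at h2
    simp at h2
    nlinarith
  have htne : t ≠ 0 := ne_of_gt ht0
  obtain ⟨z, hz⟩ := hcrys δ hδR _ hδ'R
  obtain ⟨z', hz'⟩ := hcrys _ hδ'R δ hδR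
  rw [copair_smul, copair_self hδ0] at hz
  rw [copair_smul_root htne, copair_self hδ0] at hz'
  -- hz : t * 2 = z, hz' : t⁻¹ * 2 = z'
  have hzpos : 0 < z := by
    have : (0 : ℝ) < z := by rw [← hz]; positivity
    exact_mod_cast this
  have hz'pos : 0 < z' := by
    have : (0 : ℝ) < z' := by rw [← hz']; positivity
    exact_mod_cast this
  have hmul : z * z' = 4 := by
    have : ((z * z' : ℤ) : ℝ) = 4 := by
      push_cast
      rw [← hz, ← hz']
      field_simp
      ring
    exact_mod_cast this
  have hdvd : z ∣ 4 := ⟨z', hmul.symm⟩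
  have hle : z ≤ 4 := Int.le_of_dvd (by norm_num) hdvd
  interval_cases z
  · -- z = 1 : t = 1/2, δ = δ' + δ'
    have ht : t = 1 / 2 := by
      have : t * 2 = 1 := by rw [hz]; norm_num
      linarith
    have : δ = t • δ + t • δ := by
      rw [ht]
      rw [← add_smul]
      norm_num
    rw [simpleSet, Finset.mem_filter] at hδ
    exact hδ.2 ⟨t • δ, hδ'Rp, t • δ, hδ'Rp, this⟩
  · -- z = 2 : t = 1
    have ht : t = 1 := by
      have : t * 2 = 2 := by rw [hz]; norm_num
      linarith
    rw [ht, one_smul] at hne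
    exact hne rfl
  · -- z = 3 : impossible
    omega
  · -- z = 4 : t = 2, δ' = δ + δ
    have ht : t = 2 := by
      have : t * 2 = 4 := by rw [hz]; norm_num
      linarith
    have : t • δ = δ + δ := by
      rw [ht, two_smul]
    rw [simpleSet, Finset.mem_filter] at hδ'
    exact hδ'.2 ⟨δ, hδRp, δ, hδRp, this⟩

lemma root_sub_mem (h0 : (0 : E) ∉ R)
    (hcrys : ∀ α ∈ R, ∀ β ∈ R, ∃ z : ℤ, copair α β = (z : ℝ))
    (hrc : ∀ α ∈ R, ∀ β ∈ R, reflRoot α β ∈ R)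
    {α β : E} (hα : α ∈ R) (hβ : β ∈ R)
    (hpos : 0 < ⟪α, β⟫) (hnp : ¬∃ t : ℝ, β = t • α) : α - β ∈ R := by
  have hα0 : α ≠ 0 := fun h => h0 (h ▸ hα)
  have hβ0 : β ≠ 0 := fun h => h0 (h ▸ hβ)
  have hαn : (0 : ℝ) < ‖α‖ := norm_pos_iff.mpr hα0
  have hβn : (0 : ℝ) < ‖β‖ := norm_pos_iff.mpr hβ0
  have hcs : |⟪α, β⟫| < ‖α‖ * ‖β‖ := by
    rcases lt_or_eq_of_le (abs_real_inner_le_norm α β) with h | h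
    · exact h
    · exfalso
      have h1 : |⟪α, β⟫ / (‖α‖ * ‖β‖)| = 1 := by
        rw [abs_div, h, abs_of_pos (by positivity)]
        field_simp
      obtain ⟨-, r, -, hr⟩ := (abs_real_inner_div_norm_mul_norm_eq_one_iff α β).mp h1
      exact hnp ⟨r, hr⟩
  obtain ⟨za, hza⟩ := hcrys α hα β hβ
  obtain ⟨zb, hzb⟩ := hcrys β hβ α hα
  have hαα : (⟪α, α⟫ : ℝ) = ‖α‖ ^ 2 := real_inner_self_eq_norm_sq α
  have hββ : (⟪β, β⟫ : ℝ) = ‖β‖ ^ 2 := real_inner_self_eq_norm_sq β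
  have hba : (⟪β, α⟫ : ℝ) = ⟪α, β⟫ := real_inner_comm _ _
  have hapos : (0 : ℝ) < za := by
    rw [← hza]
    unfold copair
    rw [hba, hαα]
    positivity
  have hbpos : (0 : ℝ) < zb := by
    rw [← hzb]
    unfold copair
    rw [hββ]
    positivity
  have hza1 : 1 ≤ za := by exact_mod_cast hapos
  have hzb1 : 1 ≤ zb := by exact_mod_cast hbpos
  have hab : (za : ℝ) * zb < 4 := by
    rw [← hza, ← hzb]
    unfold copair
    rw [hba, hαα, hββ]
    rw [div_mul_div_comm]
    rw [div_lt_iff₀ (by positivity)]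
    have h2 : ⟪α, β⟫ ^ 2 < (‖α‖ * ‖β‖) ^ 2 := by
      nlinarith [abs_nonneg (⟪α, β⟫ : ℝ), sq_abs (⟪α, β⟫ : ℝ)]
    nlinarith
  have hab' : za * zb < 4 := by exact_mod_cast hab
  have hone : za = 1 ∨ zb = 1 := by
    by_contra hcon
    push_neg at hcon
    have h2a : 2 ≤ za := by omega
    have h2b : 2 ≤ zb := by omega
    nlinarith
  rcases hone with h1 | h1
  · -- copair α β = 1, so reflRoot α β = β - α ∈ R
    have : reflRoot α β = β - α := by
      rw [reflRoot, hza, h1]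
      push_cast
      rw [one_smul]
    have hmem : β - α ∈ R := this ▸ hrc α hα β hβ
    have := neg_root_mem h0 hrc hmem
    rwa [neg_sub] at this
  · have : reflRoot β α = α - β := by
      rw [reflRoot, hzb, h1]
      push_cast
      rw [one_smul]
    exact this ▸ hrc β hβ α hα

lemma simple_inner_nonpos (h0 : (0 : E) ∉ R)
    (hcrys : ∀ α ∈ R, ∀ β ∈ R, ∃ z : ℤ, copair α β = (z : ℝ))
    (hrc : ∀ α ∈ R, ∀ β ∈ R, reflRoot α β ∈ R)
    (hf : ∀ α ∈ R, f α ≠ 0)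
    (hRp : ∀ α, α ∈ Rp ↔ α ∈ R ∧ 0 < f α)
    {δ δ' : E} (hδ : δ ∈ simpleSet Rp) (hδ' : δ' ∈ simpleSet Rp) (hne : δ ≠ δ') :
    ⟪δ, δ'⟫ ≤ 0 := by
  by_contra hcon
  push_neg at hcon
  have hδR : δ ∈ R := ((hRp δ).mp (simpleSet_subset Rp hδ)).1
  have hδ'R : δ' ∈ R := ((hRp δ').mp (simpleSet_subset Rp hδ')).1
  have hnp : ¬∃ t : ℝ, δ' = t • δ := simple_nonprop h0 hcrys hRp hδ hδ' hne.symm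
  have hsub : δ - δ' ∈ R := root_sub_mem h0 hcrys hrc hδR hδ'R hcon hnp
  have hfne : f (δ - δ') ≠ 0 := hf _ hsub
  rw [map_sub] at hfne
  rcases lt_or_gt_of_ne hfne with hlt | hgt
  · -- f δ < f δ' : δ' = (δ' - δ) + δ
    have hmem : δ' - δ ∈ R := by
      have := neg_root_mem h0 hrc hsub
      rwa [neg_sub] at this
    have hmem' : δ' - δ ∈ Rp := (hRp _).mpr ⟨hmem, by rw [map_sub]; linarith⟩
    rw [simpleSet, Finset.mem_filter] at hδ'
    exact hδ'.2 ⟨δ' - δ, hmem', δ, simpleSet_subset Rp hδ, by abel⟩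
  · have hmem' : δ - δ' ∈ Rp := (hRp _).mpr ⟨hsub, by rw [map_sub]; linarith⟩
    rw [simpleSet, Finset.mem_filter] at hδ
    exact hδ.2 ⟨δ - δ', hmem', δ', simpleSet_subset Rp hδ', by abel⟩

lemma simple_indep (h0 : (0 : E) ∉ R)
    (hcrys : ∀ α ∈ R, ∀ β ∈ R, ∃ z : ℤ, copair α β = (z : ℝ))
    (hrc : ∀ α ∈ R, ∀ β ∈ R, reflRoot α β ∈ R)
    (hf : ∀ α ∈ R, f α ≠ 0)
    (hRp : ∀ α, α ∈ Rp ↔ α ∈ R ∧ 0 < f α)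
    (c : E → ℝ) (hc : ∑ δ ∈ simpleSet Rp, c δ • δ = 0) :
    ∀ δ ∈ simpleSet Rp, c δ = 0 := by
  set Δ := simpleSet Rp with hΔ
  set P := Δ.filter (fun δ => 0 < c δ) with hP
  set N := Δ.filter (fun δ => c δ < 0) with hN
  have hPsub : P ⊆ Δ := Finset.filter_subset _ _
  have hNsub : N ⊆ Δ := Finset.filter_subset _ _
  have hsplit : ∑ δ ∈ P, c δ • δ + ∑ δ ∈ Δ.filter (fun δ => ¬ 0 < c δ), c δ • δ = 0 := by
    rw [Finset.sum_filter_add_sum_filter_not]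
    exact hc
  have hrest : ∑ δ ∈ Δ.filter (fun δ => ¬ 0 < c δ), c δ • δ = ∑ δ ∈ N, c δ • δ := by
    symm
    apply Finset.sum_subset
    · intro x hx
      rw [hN, Finset.mem_filter] at hx
      rw [Finset.mem_filter]
      exact ⟨hx.1, by linarith [hx.2]⟩
    · intro x hx hnx
      rw [Finset.mem_filter] at hx
      rw [hN, Finset.mem_filter] at hnx
      have : c x = 0 := by
        rcases lt_trichotomy (c x) 0 with h | h | h
        · exact absurd ⟨hx.1, h⟩ hnx
        · exact h
        · exact absurd h hx.2
      rw [this, zero_smul]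
  have hkey : ∑ δ ∈ P, c δ • δ = ∑ δ ∈ N, (-(c δ)) • δ := by
    rw [hrest] at hsplit
    have h1 : ∑ δ ∈ P, c δ • δ = -∑ δ ∈ N, c δ • δ := eq_neg_of_add_eq_zero_left hsplit
    rw [h1, ← Finset.sum_neg_distrib]
    apply Finset.sum_congr rfl
    intro δ _
    rw [neg_smul]
  set v := ∑ δ ∈ P, c δ • δ with hv
  have hvv : (⟪v, v⟫ : ℝ) ≤ 0 := by
    nth_rewrite 2 [hkey]
    rw [inner_sum]
    apply Finset.sum_nonpos
    intro δ' hδ'N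
    rw [real_inner_smul_right, hv, sum_inner]
    have hcδ' : c δ' < 0 := (Finset.mem_filter.mp hδ'N).2
    have h1 : (0:ℝ) ≤ -(c δ') := by linarith
    have h2 : ∑ δ ∈ P, (⟪c δ • δ, δ'⟫ : ℝ) ≤ 0 := by
      apply Finset.sum_nonpos
      intro δ hδP
      rw [real_inner_smul_left]
      have h3 : 0 < c δ := (Finset.mem_filter.mp hδP).2
      have hne : δ ≠ δ' := by
        rintro rfl
        linarith
      have h4 : (⟪δ, δ'⟫ : ℝ) ≤ 0 :=
        simple_inner_nonpos h0 hcrys hrc hf hRp (hPsub hδP) (hNsub hδ'N) hne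
      nlinarith
    nlinarith
  have hv0 : v = 0 := by
    have h1 : (0:ℝ) ≤ ⟪v, v⟫ := real_inner_self_nonneg
    have h2 : (⟪v, v⟫ : ℝ) = 0 := le_antisymm hvv h1
    exact inner_self_eq_zero.mp h2
  have hPempty : P = ∅ := by
    by_contra hne
    have hfv : f v = 0 := by rw [hv0, map_zero]
    rw [hv, map_sum] at hfv
    have hpos : 0 < ∑ δ ∈ P, f (c δ • δ) := by
      apply Finset.sum_pos
      · intro δ hmem
        rw [map_smul, smul_eq_mul]
        have h1 : 0 < c δ := (Finset.mem_filter.mp hmem).2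
        have h2 : 0 < f δ := ((hRp δ).mp (simpleSet_subset Rp (hPsub hmem))).2
        positivity
      · exact Finset.nonempty_of_ne_empty hne
    linarith
  have hNempty : N = ∅ := by
    by_contra hne
    have hfv : f (∑ δ ∈ N, (-(c δ)) • δ) = 0 := by
      rw [← hkey, hv0, map_zero]
    rw [map_sum] at hfv
    have hpos : 0 < ∑ δ ∈ N, f ((-(c δ)) • δ) := by
      apply Finset.sum_pos
      · intro δ hmem
        rw [map_smul, smul_eq_mul]
        have h1 : c δ < 0 := (Finset.mem_filter.mp hmem).2
        have h2 : 0 < f δ := ((hRp δ).mp (simpleSet_subset Rp (hNsub hmem))).2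
        nlinarith
      · exact Finset.nonempty_of_ne_empty hne
    linarith
  intro δ hδmem
  by_contra hne0
  rcases lt_or_gt_of_ne hne0 with h | h
  · have : δ ∈ N := Finset.mem_filter.mpr ⟨hδmem, h⟩
    rw [hNempty] at this
    exact absurd this (Finset.notMem_empty δ)
  · have : δ ∈ P := Finset.mem_filter.mpr ⟨hδmem, h⟩
    rw [hPempty] at this
    exact absurd this (Finset.notMem_empty δ)

end Simple

section Words

variable {R Rp : Finset E} {f : E →ₗ[ℝ] ℝ}

lemma real_inner_self_pos' {x : E} (hx : x ≠ 0) : (0 : ℝ) < ⟪x, x⟫ :=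
  lt_of_le_of_ne real_inner_self_nonneg (Ne.symm (inner_self_ne_zero.mpr hx))

lemma refl_simple_mem (h0 : (0 : E) ∉ R)
    (hcrys : ∀ α ∈ R, ∀ β ∈ R, ∃ z : ℤ, copair α β = (z : ℝ))
    (hrc : ∀ α ∈ R, ∀ β ∈ R, reflRoot α β ∈ R)
    (hf : ∀ α ∈ R, f α ≠ 0)
    (hRp : ∀ α, α ∈ Rp ↔ α ∈ R ∧ 0 < f α)
    {δ β : E} (hδ : δ ∈ simpleSet Rp) (hβ : β ∈ Rp)
    (hnp : ¬∃ t : ℝ, β = t • δ) : reflRoot δ β ∈ Rp := by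
  have hβR : β ∈ R := ((hRp β).mp hβ).1
  have hδRp : δ ∈ Rp := simpleSet_subset Rp hδ
  have hδR : δ ∈ R := ((hRp δ).mp hδRp).1
  have hγR : reflRoot δ β ∈ R := hrc δ hδR β hβR
  by_contra hγ
  have hfγ : f (reflRoot δ β) < 0 := by
    have hne := hf _ hγR
    rcases lt_or_gt_of_ne hne with h | h
    · exact h
    · exact absurd ((hRp _).mpr ⟨hγR, h⟩) hγ
  have hnegRp : -(reflRoot δ β) ∈ Rp := by
    refine (hRp _).mpr ⟨neg_root_mem h0 hrc hγR, ?_⟩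
    rw [map_neg]; linarith
  obtain ⟨m, hm⟩ := decomp hRp β hβ
  obtain ⟨nn, hn⟩ := decomp hRp _ hnegRp
  have hc : ∑ x ∈ simpleSet Rp,
      (((m x + nn x : ℕ) : ℝ) - (if x = δ then copair δ β else 0)) • x = 0 := by
    have e1 : ∑ x ∈ simpleSet Rp,
        (((m x + nn x : ℕ) : ℝ) - (if x = δ then copair δ β else 0)) • x
        = ∑ x ∈ simpleSet Rp, ((m x + nn x : ℕ) : ℝ) • x
          - ∑ x ∈ simpleSet Rp, (if x = δ then copair δ β else 0) • x := by
      rw [← Finset.sum_sub_distrib]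
      apply Finset.sum_congr rfl
      intro x _
      rw [sub_smul]
    have e2 : ∑ x ∈ simpleSet Rp, ((m x + nn x : ℕ) : ℝ) • x = copair δ β • δ := by
      have e5 : ∑ x ∈ simpleSet Rp, ((m x + nn x : ℕ) : ℝ) • x
          = (∑ x ∈ simpleSet Rp, ((m x : ℕ) : ℝ) • x)
            + ∑ x ∈ simpleSet Rp, ((nn x : ℕ) : ℝ) • x := by
        rw [← Finset.sum_add_distrib]
        apply Finset.sum_congr rfl
        intro x _
        push_cast
        rw [add_smul]
      rw [e5, ← hm, ← hn, reflRoot]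
      abel
    have e4 : ∑ x ∈ simpleSet Rp, (if x = δ then copair δ β else 0) • x
        = copair δ β • δ := by
      rw [Finset.sum_eq_single_of_mem δ hδ]
      · rw [if_pos rfl]
      · intro b _ hb
        rw [if_neg hb, zero_smul]
    rw [e1, e2, e4, sub_self]
  have hzero := simple_indep h0 hcrys hrc hf hRp _ hc
  have hmx : ∀ x ∈ simpleSet Rp, x ≠ δ → m x = 0 := by
    intro x hx hxne
    have h := hzero x hx
    rw [if_neg hxne, sub_zero] at h
    have : (m x + nn x : ℕ) = 0 := by exact_mod_cast h
    omega
  refine hnp ⟨(m δ : ℝ), ?_⟩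
  rw [hm, Finset.sum_eq_single_of_mem δ hδ]
  intro b hb hbne
  rw [hmx b hb hbne]
  simp

def wordProd (l : List E) : E ≃ₗ[ℝ] E := (l.map reflEquiv).prod

lemma wordProd_nil : wordProd ([] : List E) = 1 := rfl

lemma wordProd_cons (δ : E) (l : List E) :
    wordProd (δ :: l) = reflEquiv δ * wordProd l := by
  simp [wordProd]

lemma wordProd_append (l₁ l₂ : List E) :
    wordProd (l₁ ++ l₂) = wordProd l₁ * wordProd l₂ := by
  simp [wordProd]

lemma wordProd_mem {l : List E} (hl : ∀ δ ∈ l, δ ∈ R) : wordProd l ∈ weylGroup R := by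
  induction l with
  | nil => exact Subgroup.one_mem _
  | cons δ rest ih =>
    rw [wordProd_cons]
    exact Subgroup.mul_mem _ (reflEquiv_mem (hl δ List.mem_cons_self))
      (ih fun x hx => hl x (List.mem_cons_of_mem _ hx))

lemma wordProd_inv (l : List E) : (wordProd l)⁻¹ = wordProd l.reverse := by
  induction l with
  | nil => simp [wordProd]
  | cons δ rest ih =>
    rw [wordProd_cons, mul_inv_rev, ih, List.reverse_cons, wordProd_append,
      reflEquiv_inv, wordProd_cons, wordProd_nil, mul_one]

lemma reflEquiv_conj (h0 : (0 : E) ∉ R) {g : E ≃ₗ[ℝ] E} (hg : g ∈ weylGroup R) (β : E) :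
    reflEquiv (g β) = g * reflEquiv β * g⁻¹ := by
  apply LinearEquiv.toLinearMap_injective
  ext x
  show reflRoot (g β) x = g (reflRoot β (g⁻¹ x))
  have hcp : copair (g β) x = copair β (g⁻¹ x) := by
    conv_lhs => rw [← LinearEquiv.apply_inv_apply' g x]
    rw [weyl_copair h0 hg]
  rw [reflRoot, reflRoot, hcp, map_sub, map_smul, LinearEquiv.apply_inv_apply']

lemma refl_word (h0 : (0 : E) ∉ R)
    (hcrys : ∀ α ∈ R, ∀ β ∈ R, ∃ z : ℤ, copair α β = (z : ℝ))
    (hrc : ∀ α ∈ R, ∀ β ∈ R, reflRoot α β ∈ R)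
    (hf : ∀ α ∈ R, f α ≠ 0)
    (hRp : ∀ α, α ∈ Rp ↔ α ∈ R ∧ 0 < f α) :
    ∀ β ∈ Rp, ∃ l : List E, (∀ δ ∈ l, δ ∈ simpleSet Rp) ∧ reflEquiv β = wordProd l := by
  suffices H : ∀ n : ℕ, ∀ β ∈ Rp, (Rp.filter fun x => f x < f β).card ≤ n →
      ∃ l : List E, (∀ δ ∈ l, δ ∈ simpleSet Rp) ∧ reflEquiv β = wordProd l by
    intro β hβ; exact H _ β hβ le_rfl
  have main : ∀ n : ℕ,
      (∀ m : ℕ, m < n → ∀ β ∈ Rp, (Rp.filter fun x => f x < f β).card ≤ m →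
        ∃ l : List E, (∀ δ ∈ l, δ ∈ simpleSet Rp) ∧ reflEquiv β = wordProd l) →
      ∀ β ∈ Rp, (Rp.filter fun x => f x < f β).card ≤ n →
      ∃ l : List E, (∀ δ ∈ l, δ ∈ simpleSet Rp) ∧ reflEquiv β = wordProd l := by
    intro n ih β hβ hcard
    have hβR : β ∈ R := ((hRp β).mp hβ).1
    have hβ0 : β ≠ 0 := fun h => h0 (h ▸ hβR)
    by_cases hprop : ∃ δ ∈ simpleSet Rp, ∃ t : ℝ, β = t • δ
    · obtain ⟨δ, hδ, t, rfl⟩ := hprop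
      have ht0 : t ≠ 0 := by
        rintro rfl
        rw [zero_smul] at hβ0
        exact hβ0 rfl
      exact ⟨[δ], by simp [hδ], by rw [reflEquiv_smul ht0, wordProd_cons, wordProd_nil, mul_one]⟩
    · push_neg at hprop
      obtain ⟨m, hm⟩ := decomp hRp β hβ
      have hββ : (0 : ℝ) < ⟪β, β⟫ := real_inner_self_pos' hβ0
      have hsum : (⟪β, β⟫ : ℝ) = ∑ x ∈ simpleSet Rp, (m x : ℝ) * ⟪β, x⟫ := by
        conv_lhs => rw [show (⟪β, β⟫:ℝ) = ⟪β, ∑ x ∈ simpleSet Rp, (m x:ℝ) • x⟫ by rw [← hm]]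
        rw [inner_sum]
        apply Finset.sum_congr rfl
        intro x _
        rw [real_inner_smul_right]
      have hex : ∃ δ ∈ simpleSet Rp, 0 < ⟪β, δ⟫ := by
        by_contra hcon
        push_neg at hcon
        have : ∑ x ∈ simpleSet Rp, (m x : ℝ) * ⟪β, x⟫ ≤ 0 := by
          apply Finset.sum_nonpos
          intro x hx
          have h1 := hcon x hx
          have h2 : (0:ℝ) ≤ (m x : ℝ) := by positivity
          exact mul_nonpos_of_nonneg_of_nonpos h2 h1
        linarith [hsum ▸ hββ]
      obtain ⟨δ, hδ, hpos⟩ := hex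
      have hδRp : δ ∈ Rp := simpleSet_subset Rp hδ
      have hδR : δ ∈ R := ((hRp δ).mp hδRp).1
      have hδ0 : δ ≠ 0 := fun h => h0 (h ▸ hδR)
      have hnp : ¬∃ t : ℝ, β = t • δ := by
        rintro ⟨t, ht⟩
        exact hprop δ hδ t ht
      have hβ'Rp : reflRoot δ β ∈ Rp := refl_simple_mem h0 hcrys hrc hf hRp hδ hβ hnp
      have hflt : f (reflRoot δ β) < f β := by
        rw [reflRoot, map_sub, map_smul, smul_eq_mul]
        have h1 : 0 < copair δ β := by
          rw [copair]
          have hδδ : (0:ℝ) < ⟪δ, δ⟫ := real_inner_self_pos' hδ0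
          exact div_pos (by linarith) hδδ
        have h2 : 0 < f δ := ((hRp δ).mp hδRp).2
        nlinarith
      have hmeas := filter_card_lt (f := f) hβ'Rp hflt
      have hlt : (Rp.filter fun x => f x < f (reflRoot δ β)).card < n := by
        omega
      obtain ⟨l', hl', heq⟩ := ih _ hlt _ hβ'Rp le_rfl
      have hββ' : β = reflRoot δ (reflRoot δ β) := (reflRoot_involutive δ β).symm
      have hconj : reflEquiv β = reflEquiv δ * reflEquiv (reflRoot δ β) * (reflEquiv δ)⁻¹ := by
        conv_lhs => rw [hββ']
        exact reflEquiv_conj h0 (reflEquiv_mem hδR) (reflRoot δ β)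
      refine ⟨δ :: (l' ++ [δ]), ?_, ?_⟩
      · intro x hx
        rcases List.mem_cons.mp hx with rfl | hx
        · exact hδ
        · rcases List.mem_append.mp hx with hx | hx
          · exact hl' x hx
          · rw [List.mem_singleton.mp hx]; exact hδ
      · rw [wordProd_cons, wordProd_append, hconj, heq, reflEquiv_inv]
        rw [show wordProd [δ] = reflEquiv δ by simp [wordProd]]
        rw [mul_assoc]
  intro n
  induction n using Nat.strong_induction_on with
  | _ n ih => exact main n ih

lemma weyl_word (h0 : (0 : E) ∉ R)
    (hcrys : ∀ α ∈ R, ∀ β ∈ R, ∃ z : ℤ, copair α β = (z : ℝ))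
    (hrc : ∀ α ∈ R, ∀ β ∈ R, reflRoot α β ∈ R)
    (hf : ∀ α ∈ R, f α ≠ 0)
    (hRp : ∀ α, α ∈ Rp ↔ α ∈ R ∧ 0 < f α)
    {w : E ≃ₗ[ℝ] E} (hw : w ∈ weylGroup R) :
    ∃ l : List E, (∀ δ ∈ l, δ ∈ simpleSet Rp) ∧ w = wordProd l := by
  refine Subgroup.closure_induction
    (p := fun g _ => ∃ l : List E, (∀ δ ∈ l, δ ∈ simpleSet Rp) ∧ g = wordProd l)
    ?_ ?_ ?_ ?_ hw
  · rintro g ⟨α, hαR, hgα⟩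
    have hge : g = reflEquiv α := by
      apply LinearEquiv.toLinearMap_injective
      ext x
      exact hgα x
    have hα0 : α ≠ 0 := fun h => h0 (h ▸ hαR)
    rcases lt_or_gt_of_ne (hf α hαR) with hneg | hpos
    · have : -α ∈ Rp := (hRp _).mpr ⟨neg_root_mem h0 hrc hαR, by rw [map_neg]; linarith⟩
      obtain ⟨l, hl, heq⟩ := refl_word h0 hcrys hrc hf hRp _ this
      exact ⟨l, hl, by rw [hge, ← reflEquiv_neg, heq]⟩
    · have : α ∈ Rp := (hRp _).mpr ⟨hαR, hpos⟩
      obtain ⟨l, hl, heq⟩ := refl_word h0 hcrys hrc hf hRp _ this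
      exact ⟨l, hl, hge ▸ heq⟩
  · exact ⟨[], by simp, rfl⟩
  · rintro g h _ _ ⟨l₁, hl₁, rfl⟩ ⟨l₂, hl₂, rfl⟩
    refine ⟨l₁ ++ l₂, ?_, (wordProd_append l₁ l₂).symm⟩
    intro x hx
    rcases List.mem_append.mp hx with hx | hx
    · exact hl₁ x hx
    · exact hl₂ x hx
  · rintro g _ ⟨l, hl, rfl⟩
    exact ⟨l.reverse, fun x hx => hl x (List.mem_reverse.mp hx), by rw [wordProd_inv]⟩

end Words

section Exchange

variable {R Rp : Finset E} {f : E →ₗ[ℝ] ℝ}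

lemma exchange (h0 : (0 : E) ∉ R)
    (hcrys : ∀ α ∈ R, ∀ β ∈ R, ∃ z : ℤ, copair α β = (z : ℝ))
    (hrc : ∀ α ∈ R, ∀ β ∈ R, reflRoot α β ∈ R)
    (hf : ∀ α ∈ R, f α ≠ 0)
    (hRp : ∀ α, α ∈ Rp ↔ α ∈ R ∧ 0 < f α) :
    ∀ l : List E, (∀ δ ∈ l, δ ∈ simpleSet Rp) → ∀ α ∈ simpleSet Rp,
      f (wordProd l α) < 0 →
      ∃ l' : List E, (∀ δ ∈ l', δ ∈ simpleSet Rp) ∧ l'.length + 1 = l.length ∧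
        wordProd l * reflEquiv α = wordProd l' := by
  intro l
  induction l with
  | nil =>
    intro _ α hα hneg
    exfalso
    have h1 : wordProd ([] : List E) α = α := rfl
    rw [h1] at hneg
    have := ((hRp α).mp (simpleSet_subset Rp hα)).2
    linarith
  | cons δ₀ rest ih =>
    intro hl α hα hneg
    have hδ₀ : δ₀ ∈ simpleSet Rp := hl δ₀ List.mem_cons_self
    have hrest : ∀ δ ∈ rest, δ ∈ simpleSet Rp := fun x hx => hl x (List.mem_cons_of_mem _ hx)
    have hrestR : ∀ δ ∈ rest, δ ∈ R := fun x hx => ((hRp x).mp (simpleSet_subset Rp (hrest x hx))).1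
    have happ : wordProd (δ₀ :: rest) α = reflRoot δ₀ (wordProd rest α) := by
      rw [wordProd_cons]; rfl
    by_cases hcase : f (wordProd rest α) < 0
    · obtain ⟨l', hl', hlen, heq⟩ := ih hrest α hα hcase
      refine ⟨δ₀ :: l', ?_, ?_, ?_⟩
      · intro x hx
        rcases List.mem_cons.mp hx with rfl | hx
        · exact hδ₀
        · exact hl' x hx
      · simp only [List.length_cons]; omega
      · rw [wordProd_cons, mul_assoc, heq, ← wordProd_cons]
    · have hwrest : wordProd rest ∈ weylGroup R := wordProd_mem hrestR
      have hαR : α ∈ R := ((hRp α).mp (simpleSet_subset Rp hα)).1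
      have hβR : wordProd rest α ∈ R := (weyl_root h0 hrc hwrest α hαR).1
      have hβ0 : wordProd rest α ≠ 0 := fun h => h0 (h ▸ hβR)
      have hβRp : wordProd rest α ∈ Rp := by
        refine (hRp _).mpr ⟨hβR, ?_⟩
        rcases lt_or_gt_of_ne (hf _ hβR) with h | h
        · exact absurd h hcase
        · exact h
      have hprop : ∃ t : ℝ, wordProd rest α = t • δ₀ := by
        by_contra hnp
        have hmem := refl_simple_mem h0 hcrys hrc hf hRp hδ₀ hβRp hnp
        have := ((hRp _).mp hmem).2
        rw [happ] at hneg
        linarith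
      obtain ⟨t, ht⟩ := hprop
      have ht0 : t ≠ 0 := by
        rintro rfl
        rw [zero_smul] at ht
        exact hβ0 ht
      have hconj : reflEquiv (wordProd rest α)
          = wordProd rest * reflEquiv α * (wordProd rest)⁻¹ :=
        reflEquiv_conj h0 hwrest α
      have heq0 : reflEquiv δ₀ = wordProd rest * reflEquiv α * (wordProd rest)⁻¹ := by
        rw [← hconj, ht, reflEquiv_smul ht0]
      refine ⟨rest, hrest, by simp, ?_⟩
      rw [wordProd_cons, heq0]
      rw [mul_assoc (wordProd rest * reflEquiv α) (wordProd rest)⁻¹ (wordProd rest),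
        inv_mul_cancel, mul_one, mul_assoc, reflEquiv_mul_self, mul_one]

lemma word_id (h0 : (0 : E) ∉ R)
    (hcrys : ∀ α ∈ R, ∀ β ∈ R, ∃ z : ℤ, copair α β = (z : ℝ))
    (hrc : ∀ α ∈ R, ∀ β ∈ R, reflRoot α β ∈ R)
    (hf : ∀ α ∈ R, f α ≠ 0)
    (hRp : ∀ α, α ∈ Rp ↔ α ∈ R ∧ 0 < f α) :
    ∀ n : ℕ, ∀ l : List E, l.length ≤ n → (∀ δ ∈ l, δ ∈ simpleSet Rp) →
      (∀ β ∈ Rp, 0 < f (wordProd l β)) → wordProd l = 1 := by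
  intro n
  induction n with
  | zero =>
    intro l hlen _ _
    rw [List.eq_nil_of_length_eq_zero (Nat.le_zero.mp hlen)]
    rfl
  | succ n ih =>
    intro l hlen hl hpos
    rcases List.eq_nil_or_concat l with rfl | ⟨l₀, δ, rfl⟩
    · rfl
    · have hδ : δ ∈ simpleSet Rp := hl δ (by simp)
      have hδRp : δ ∈ Rp := simpleSet_subset Rp hδ
      have hδR : δ ∈ R := ((hRp δ).mp hδRp).1
      have hδ0 : δ ≠ 0 := fun h => h0 (h ▸ hδR)
      have hl₀ : ∀ x ∈ l₀, x ∈ simpleSet Rp := fun x hx => hl x (by simp [hx])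
      have hw : wordProd (l₀.concat δ) = wordProd l₀ * reflEquiv δ := by
        rw [List.concat_eq_append, wordProd_append, wordProd_cons, wordProd_nil, mul_one]
      have hneg : f (wordProd l₀ δ) < 0 := by
        have h1 : 0 < f (wordProd (l₀.concat δ) δ) := hpos δ hδRp
        have h2 : wordProd (l₀.concat δ) δ = -(wordProd l₀ δ) := by
          rw [hw]
          show wordProd l₀ (reflEquiv δ δ) = -(wordProd l₀ δ)
          rw [reflEquiv_apply, reflRoot_self hδ0, map_neg]
        rw [h2, map_neg] at h1
        linarith
      obtain ⟨l', hl', hlen', heq⟩ := exchange h0 hcrys hrc hf hRp l₀ hl₀ δ hδ hneg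
      have hwl : wordProd (l₀.concat δ) = wordProd l' := by rw [hw, heq]
      rw [hwl]
      have hlenl : (l₀.concat δ).length = l₀.length + 1 := by simp
      refine ih l' (by omega) hl' ?_
      intro β hβ
      rw [← hwl]
      exact hpos β hβ

end Exchange

section Main

variable {R Rp : Finset E} {f : E →ₗ[ℝ] ℝ}

lemma ncount_step (h0 : (0 : E) ∉ R)
    (hcrys : ∀ α ∈ R, ∀ β ∈ R, ∃ z : ℤ, copair α β = (z : ℝ))
    (hrc : ∀ α ∈ R, ∀ β ∈ R, reflRoot α β ∈ R)
    (hf : ∀ α ∈ R, f α ≠ 0)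
    (hRp : ∀ α, α ∈ Rp ↔ α ∈ R ∧ 0 < f α)
    {v : E ≃ₗ[ℝ] E} {δ : E} (hδ : δ ∈ simpleSet Rp) (hneg : f (v δ) < 0) :
    (Rp.filter fun β => f ((v * reflEquiv δ) β) < 0).card
      < (Rp.filter fun β => f (v β) < 0).card := by
  have hδRp : δ ∈ Rp := simpleSet_subset Rp hδ
  have hδR : δ ∈ R := ((hRp δ).mp hδRp).1
  have hδ0 : δ ≠ 0 := fun h => h0 (h ▸ hδR)
  have hfδ : 0 < f δ := ((hRp δ).mp hδRp).2
  set A := Rp.filter fun β => f ((v * reflEquiv δ) β) < 0 with hA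
  set B := Rp.filter fun β => f (v β) < 0 with hB
  have hδB : δ ∈ B := Finset.mem_filter.mpr ⟨hδRp, hneg⟩
  have happly : ∀ β, (v * reflEquiv δ) β = v (reflRoot δ β) := fun β => rfl
  have hmapsto : ∀ β ∈ A, reflRoot δ β ∈ B.erase δ := by
    intro β hβA
    rw [hA, Finset.mem_filter] at hβA
    obtain ⟨hβRp, hβneg⟩ := hβA
    rw [happly] at hβneg
    have hnp : ¬∃ t : ℝ, β = t • δ := by
      rintro ⟨t, rfl⟩
      have ht : 0 < t := by
        have h1 : 0 < f (t • δ) := ((hRp _).mp hβRp).2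
        rw [map_smul, smul_eq_mul] at h1
        nlinarith
      have hrr : reflRoot δ (t • δ) = -(t • δ) := by
        rw [reflRoot, copair_smul, copair_self hδ0]
        module
      rw [hrr, map_neg, map_neg] at hβneg
      rw [map_smul, map_smul, smul_eq_mul] at hβneg
      nlinarith
    have hmem : reflRoot δ β ∈ Rp := refl_simple_mem h0 hcrys hrc hf hRp hδ hβRp hnp
    rw [Finset.mem_erase]
    constructor
    · intro heq
      have h5 := congrArg (reflRoot δ) heq
      rw [reflRoot_involutive] at h5
      rw [reflRoot_self hδ0] at h5
      have h6 : 0 < f β := ((hRp β).mp hβRp).2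
      rw [h5, map_neg] at h6
      linarith
    · rw [hB, Finset.mem_filter]
      refine ⟨hmem, ?_⟩
      rwa [← happly]
  have hinj : Set.InjOn (reflRoot δ) A := by
    intro x _ y _ h
    have := congrArg (reflRoot δ) h
    rwa [reflRoot_involutive, reflRoot_involutive] at this
  have h1 : A.card ≤ (B.erase δ).card := Finset.card_le_card_of_injOn _ hmapsto hinj
  have h2 : (B.erase δ).card < B.card := Finset.card_erase_lt_of_mem hδB
  omega

lemma lemB (h0 : (0 : E) ∉ R)
    (hcrys : ∀ α ∈ R, ∀ β ∈ R, ∃ z : ℤ, copair α β = (z : ℝ))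
    (hrc : ∀ α ∈ R, ∀ β ∈ R, reflRoot α β ∈ R)
    (hf : ∀ α ∈ R, f α ≠ 0)
    (hRp : ∀ α, α ∈ Rp ↔ α ∈ R ∧ 0 < f α)
    {lam : E} (hlamP : IsWeight R lam) (hlamD : IsDominant Rp lam) :
    ∀ v ∈ weylGroup R, InQPlus Rp (lam - v lam) := by
  suffices H : ∀ n : ℕ, ∀ v ∈ weylGroup R,
      (Rp.filter fun β => f (v β) < 0).card ≤ n → InQPlus Rp (lam - v lam) by
    intro v hv; exact H _ v hv le_rfl
  intro n
  induction n with
  | zero =>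
    intro v hv hcard
    -- no positive root is sent negative
    have hpos : ∀ β ∈ Rp, 0 < f (v β) := by
      intro β hβ
      have hβR : β ∈ R := ((hRp β).mp hβ).1
      have hvβR : v β ∈ R := (weyl_root h0 hrc hv β hβR).1
      rcases lt_or_gt_of_ne (hf _ hvβR) with h | h
      · exfalso
        have : β ∈ Rp.filter fun β => f (v β) < 0 := Finset.mem_filter.mpr ⟨hβ, h⟩
        have := Finset.card_pos.mpr ⟨β, this⟩
        omega
      · exact h
    obtain ⟨l, hl, rfl⟩ := weyl_word h0 hcrys hrc hf hRp hv
    rw [word_id h0 hcrys hrc hf hRp l.length l le_rfl hl hpos]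
    have : lam - (1 : E ≃ₗ[ℝ] E) lam = 0 := by
      show lam - lam = 0
      rw [sub_self]
    rw [this]
    exact inQPlus_zero Rp
  | succ n ih =>
    intro v hv hcard
    by_cases hN : ∃ δ ∈ simpleSet Rp, f (v δ) < 0
    · obtain ⟨δ, hδ, hneg⟩ := hN
      have hδRp : δ ∈ Rp := simpleSet_subset Rp hδ
      have hδR : δ ∈ R := ((hRp δ).mp hδRp).1
      have hv' : v * reflEquiv δ ∈ weylGroup R := Subgroup.mul_mem _ hv (reflEquiv_mem hδR)
      have hstep := ncount_step h0 hcrys hrc hf hRp hδ hneg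
      have hIH := ih (v * reflEquiv δ) hv' (by omega)
      -- coefficient
      obtain ⟨z, hz⟩ := hlamP δ hδR
      have hznn : 0 ≤ z := by
        have := hlamD δ hδRp
        rw [hz] at this
        exact_mod_cast this
      have hvδR : v δ ∈ R := (weyl_root h0 hrc hv δ hδR).1
      have hnegRp : -(v δ) ∈ Rp := by
        refine (hRp _).mpr ⟨neg_root_mem h0 hrc hvδR, ?_⟩
        rw [map_neg]; linarith
      have hkey : lam - v lam
          = (lam - (v * reflEquiv δ) lam) + ((z.toNat : ℝ)) • (-(v δ)) := by
        have h1 : (v * reflEquiv δ) lam = v lam - copair δ lam • v δ := by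
          show v (reflRoot δ lam) = v lam - copair δ lam • v δ
          rw [reflRoot, map_sub, map_smul]
        rw [h1]
        have h2 : (z.toNat : ℝ) = copair δ lam := by
          rw [hz]
          norm_cast
          omega
        rw [h2]
        have h3 : copair δ lam • (-(v δ)) = -(copair δ lam • v δ) := by
          rw [smul_neg]
        rw [h3]
        abel
      rw [hkey]
      exact inQPlus_add hIH (inQPlus_nsmul_single hnegRp z.toNat)
    · -- all simple roots stay positive ⇒ all positive roots stay positive ⇒ card = 0
      push_neg at hN
      have hpos : ∀ β ∈ Rp, 0 < f (v β) := by
        intro β hβ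
        have hβR : β ∈ R := ((hRp β).mp hβ).1
        have hvβR : v β ∈ R := (weyl_root h0 hrc hv β hβR).1
        obtain ⟨m, hm⟩ := decomp hRp β hβ
        have hfn : 0 ≤ f (v β) := by
          rw [hm, map_sum, map_sum]
          apply Finset.sum_nonneg
          intro x hx
          rw [map_smul, map_smul, smul_eq_mul]
          have hxRp : x ∈ Rp := simpleSet_subset Rp hx
          have hxR : x ∈ R := ((hRp x).mp hxRp).1
          have hvxR : v x ∈ R := (weyl_root h0 hrc hv x hxR).1
          have h2 : 0 ≤ f (v x) := hN x hx
          positivity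
        exact lt_of_le_of_ne hfn (Ne.symm (hf _ hvβR))
      obtain ⟨l, hl, rfl⟩ := weyl_word h0 hcrys hrc hf hRp hv
      rw [word_id h0 hcrys hrc hf hRp l.length l le_rfl hl hpos]
      have : lam - (1 : E ≃ₗ[ℝ] E) lam = 0 := by
        show lam - lam = 0
        rw [sub_self]
      rw [this]
      exact inQPlus_zero Rp

lemma lemC (h0 : (0 : E) ∉ R)
    (hrc : ∀ α ∈ R, ∀ β ∈ R, reflRoot α β ∈ R)
    (hf : ∀ α ∈ R, f α ≠ 0)
    (hRp : ∀ α, α ∈ Rp ↔ α ∈ R ∧ 0 < f α)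
    {w : E ≃ₗ[ℝ] E} (hw : w ∈ weylGroup R) :
    InQPlus Rp ((2⁻¹ : ℝ) • ∑ α ∈ Rp, α - w ((2⁻¹ : ℝ) • ∑ α ∈ Rp, α)) := by
  classical
  set S := Rp.image (fun α => w α) with hS
  have hwinj : Function.Injective (fun α => w α) := fun a b hab => by
    have h := congrArg w.symm hab
    rwa [LinearEquiv.symm_apply_apply, LinearEquiv.symm_apply_apply] at h
  have hSR : ∀ β ∈ S, β ∈ R := by
    intro β hβ
    obtain ⟨α, hα, rfl⟩ := Finset.mem_image.mp hβ
    exact (weyl_root h0 hrc hw α ((hRp α).mp hα).1).1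
  have key1 : ∀ α ∈ Rp, α ∉ S → (-α ∈ S ∧ -α ∉ Rp) := by
    intro α hα hαS
    have hαR : α ∈ R := ((hRp α).mp hα).1
    have hfα : 0 < f α := ((hRp α).mp hα).2
    have hwα : w⁻¹ α ∈ R := (weyl_root h0 hrc hw α hαR).2
    have hneg : f (w⁻¹ α) < 0 := by
      rcases lt_or_gt_of_ne (hf _ hwα) with h | h
      · exact h
      · exfalso
        apply hαS
        rw [hS, Finset.mem_image]
        exact ⟨w⁻¹ α, (hRp _).mpr ⟨hwα, h⟩, LinearEquiv.apply_inv_apply' w α⟩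
    constructor
    · rw [hS, Finset.mem_image]
      refine ⟨-(w⁻¹ α), (hRp _).mpr ⟨neg_root_mem h0 hrc hwα, by rw [map_neg]; linarith⟩, ?_⟩
      show w (-(w⁻¹ α)) = -α
      rw [map_neg, LinearEquiv.apply_inv_apply']
    · intro hmem
      have := ((hRp _).mp hmem).2
      rw [map_neg] at this
      linarith
  have key2 : ∀ β ∈ S, β ∉ Rp → (-β ∈ Rp ∧ -β ∉ S) := by
    intro β hβ hβRp
    have hβR : β ∈ R := hSR β hβ
    have hneg : f β < 0 := by
      rcases lt_or_gt_of_ne (hf _ hβR) with h | h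
      · exact h
      · exact absurd ((hRp _).mpr ⟨hβR, h⟩) hβRp
    refine ⟨(hRp _).mpr ⟨neg_root_mem h0 hrc hβR, by rw [map_neg]; linarith⟩, ?_⟩
    intro hmem
    obtain ⟨α₁, hα₁, hw₁⟩ := Finset.mem_image.mp hmem
    obtain ⟨α₀, hα₀, hw₀⟩ := Finset.mem_image.mp hβ
    have : α₁ = -α₀ := by
      apply hwinj
      show w α₁ = w (-α₀)
      rw [map_neg]
      rw [show w α₁ = -β from hw₁, show w α₀ = β from hw₀]
    have h1 : 0 < f α₁ := ((hRp _).mp hα₁).2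
    have h0' : 0 < f α₀ := ((hRp _).mp hα₀).2
    rw [this, map_neg] at h1
    linarith
  have himage : (Rp \ S).image (fun x => -x) = S \ Rp := by
    ext x
    simp only [Finset.mem_image, Finset.mem_sdiff]
    constructor
    · rintro ⟨y, ⟨hy1, hy2⟩, rfl⟩
      exact ⟨(key1 y hy1 hy2).1, (key1 y hy1 hy2).2⟩
    · rintro ⟨hx1, hx2⟩
      exact ⟨-x, ⟨(key2 x hx1 hx2).1, (key2 x hx1 hx2).2⟩, by rw [neg_neg]⟩
  have hsumS : w (∑ α ∈ Rp, α) = ∑ β ∈ S, β := by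
    rw [map_sum, hS, Finset.sum_image (fun a _ b _ hab => hwinj hab)]
  have hsplit1 : ∑ α ∈ Rp, α = ∑ α ∈ Rp ∩ S, α + ∑ α ∈ Rp \ S, α :=
    (Finset.sum_inter_add_sum_sdiff Rp S _).symm
  have hsplit2 : ∑ β ∈ S, β = ∑ β ∈ Rp ∩ S, β + ∑ β ∈ S \ Rp, β := by
    rw [Finset.inter_comm]
    exact (Finset.sum_inter_add_sum_sdiff S Rp _).symm
  have hsneg : ∑ β ∈ S \ Rp, β = -∑ α ∈ Rp \ S, α := by
    rw [← himage, Finset.sum_image]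
    · rw [← Finset.sum_neg_distrib]
    · intro a _ b _ hab
      exact neg_injective hab
  have hmain : (2⁻¹ : ℝ) • ∑ α ∈ Rp, α - w ((2⁻¹ : ℝ) • ∑ α ∈ Rp, α)
      = ∑ α ∈ Rp \ S, α := by
    rw [map_smul, hsumS, ← smul_sub]
    rw [hsplit1, hsplit2, hsneg]
    rw [show ∑ α ∈ Rp ∩ S, α + ∑ α ∈ Rp \ S, α - (∑ β ∈ Rp ∩ S, β + -∑ α ∈ Rp \ S, α)
      = (2 : ℝ) • ∑ α ∈ Rp \ S, α by rw [two_smul]; abel]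
    rw [smul_smul]
    norm_num
  rw [hmain]
  refine ⟨fun α => if α ∈ Rp \ S then 1 else 0, ?_⟩
  have hconv : ∑ α ∈ Rp, (((if α ∈ Rp \ S then 1 else 0 : ℕ)) : ℝ) • α
      = ∑ α ∈ Rp, (if α ∈ Rp \ S then α else 0) := by
    apply Finset.sum_congr rfl
    intro x _
    by_cases h : x ∈ Rp \ S
    · rw [if_pos h, if_pos h]; norm_num
    · rw [if_neg h, if_neg h]; norm_num
  rw [hconv, Finset.sum_ite_mem, Finset.inter_eq_right.mpr (Finset.sdiff_subset)]

end Main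

/-- **Triangularity of the Macdonald operator.**  For a dominant weight
`λ ∈ P⁺`, any `ν ∈ W(λ)` and any `w ∈ W`, the weight `w(ν+ρ) − ρ` is `≼ λ`
in the dominance order, i.e. `λ − (w(ν+ρ) − ρ) ∈ Q⁺`. -/
theorem macdonald_triangularity
    (R Rp : Finset E)
    (h0 : (0 : E) ∉ R)
    (hspan : Submodule.span ℝ (R : Set E) = ⊤)
    (hcrys : ∀ α ∈ R, ∀ β ∈ R, ∃ z : ℤ, copair α β = (z : ℝ))
    (hrc : ∀ α ∈ R, ∀ β ∈ R, reflRoot α β ∈ R)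
    (f : E →ₗ[ℝ] ℝ) (hf : ∀ α ∈ R, f α ≠ 0)
    (hRp : ∀ α, α ∈ Rp ↔ α ∈ R ∧ 0 < f α)
    (ρ : E) (hρ : ρ = (2⁻¹ : ℝ) • ∑ α ∈ Rp, α)
    (lam : E) (hlamP : IsWeight R lam) (hlamD : IsDominant Rp lam)
    (ν : E) (hν : ∃ u ∈ weylGroup R, (u : E ≃ₗ[ℝ] E) lam = ν)
    (w : E ≃ₗ[ℝ] E) (hw : w ∈ weylGroup R) :
    InQPlus Rp (lam - (w (ν + ρ) - ρ)) := by
  obtain ⟨u, hu, huν⟩ := hν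
  subst hρ
  have hWv : w * u ∈ weylGroup R := Subgroup.mul_mem _ hw hu
  have hB := lemB h0 hcrys hrc hf hRp hlamP hlamD (w * u) hWv
  have hC := lemC h0 hrc hf hRp hw
  have hkey : lam - (w (ν + (2⁻¹ : ℝ) • ∑ α ∈ Rp, α) - (2⁻¹ : ℝ) • ∑ α ∈ Rp, α)
      = (lam - (w * u) lam)
        + ((2⁻¹ : ℝ) • ∑ α ∈ Rp, α - w ((2⁻¹ : ℝ) • ∑ α ∈ Rp, α)) := by
    rw [← huν, map_add]
    rw [show (w * u) lam = w (u lam) from rfl]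
    abel
  rw [hkey]
  exact inQPlus_add hB hC
end
end
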